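/- Let (X,d) be a compact metric space and f : X → X an arbitrary self-map. Then X contains a nonempty f-invariant chain-transitive subset, i.e., a nonempty set S with f(S) ⊆ S such that x 𝒞 y for all x, y ∈ S. -/

import Mathlib

open Filter Topology Set

variable {X : Type*}

section Defs
variable [PseudoMetricSpace X]

def IsEpsChain (f : X → X) (ε : ℝ) (n : ℕ) (c : ℕ → X) (x y : X) : Prop :=
  1 ≤ n ∧ c 0 = x ∧ c n = y ∧ ∀ i < n, dist (f (c i)) (c (i + 1)) < ε

def EpsChain (f : X → X) (ε : ℝ) (x y : X) : Prop :=
  ∃ n c, IsEpsChain f ε n c x y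

/-- The chain relation `x 𝒞 y`. -/
def ChainRel (f : X → X) (x y : X) : Prop :=
  ∀ ε > 0, EpsChain f ε x y

def EpsChainIn (f : X → X) (S : Set X) (ε : ℝ) (x y : X) : Prop :=
  ∃ n c, IsEpsChain f ε n c x y ∧ ∀ i ≤ n, c i ∈ S

def ChainRelIn (f : X → X) (S : Set X) (x y : X) : Prop :=
  ∀ ε > 0, EpsChainIn f S ε x y

def InternallyChainTransitive (f : X → X) (S : Set X) : Prop :=
  ∀ x ∈ S, ∀ y ∈ S, ∀ ε > 0, EpsChainIn f S ε x y

/-- The nested-chain relation `x 𝒞⊆ y`. -/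
def NestedChainRel (f : X → X) (x y : X) : Prop :=
  ∃ ε : ℕ → ℝ, (∀ n, 0 < ε n) ∧ Antitone ε ∧ Tendsto ε atTop (𝓝 0) ∧
    ∃ N : ℕ → ℕ, ∃ c : ℕ → ℕ → X,
      (∀ n, IsEpsChain f (ε n) (N n) (c n) x y) ∧
      ∀ n, c n '' Set.Iic (N n) ⊆ c (n + 1) '' Set.Iic (N (n + 1))

/-- The nested-chain relation with all chain points inside `S`. -/
def NestedChainRelIn (f : X → X) (S : Set X) (x y : X) : Prop :=
  ∃ ε : ℕ → ℝ, (∀ n, 0 < ε n) ∧ Antitone ε ∧ Tendsto ε atTop (𝓝 0) ∧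
    ∃ N : ℕ → ℕ, ∃ c : ℕ → ℕ → X,
      (∀ n, IsEpsChain f (ε n) (N n) (c n) x y ∧ ∀ i ≤ N n, c n i ∈ S) ∧
      ∀ n, c n '' Set.Iic (N n) ⊆ c (n + 1) '' Set.Iic (N (n + 1))

end Defs

/-- Strong `(ε,d)`-chain for an explicitly given distance function `d`. -/
def StrongEpsChainWith (d : X → X → ℝ) (f : X → X) (ε : ℝ) (x y : X) : Prop :=
  ∃ n, 1 ≤ n ∧ ∃ c : ℕ → X, c 0 = x ∧ c n = y ∧
    (∑ i ∈ Finset.range n, d (f (c i)) (c (i + 1))) < ε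

/-- The strong chain relation `x 𝒮𝒞_d y`. -/
def StrongChainRelWith (d : X → X → ℝ) (f : X → X) (x y : X) : Prop :=
  ∀ ε > 0, StrongEpsChainWith d f ε x y

/-!
Points chain-reachable from `x` form a nonempty closed set `chainSet f x`, and `y ∈ chainSet f x`
implies `chainSet f y ⊆ chainSet f x`. By compactness a chain of such sets has a nonempty
intersection, and any point `z` of it gives a lower bound `chainSet f z`; so by Zorn some
`chainSet f x` is minimal. Minimality forces `chainSet f y = chainSet f x` for all `y` in it,
which is chain transitivity, and `f y ∈ chainSet f y` gives invariance.
-/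

section ChainRel
variable [PseudoMetricSpace X] {f : X → X}

theorem EpsChain.trans {ε : ℝ} {x y z : X} (hxy : EpsChain f ε x y) (hyz : EpsChain f ε y z) :
    EpsChain f ε x z := by
  obtain ⟨n, c, hn, hc0, hcn, hc⟩ := hxy
  obtain ⟨m, d, hm, hd0, hdm, hd⟩ := hyz
  refine ⟨n + m, fun i => if i ≤ n then c i else d (i - n), by omega, by simp [hc0], ?_, ?_⟩
  · simp only [if_neg (by omega : ¬n + m ≤ n), Nat.add_sub_cancel_left, hdm]
  · intro i hi
    by_cases hin : i + 1 ≤ n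
    · simp only [if_pos (by omega : i ≤ n), if_pos hin]
      exact hc i (by omega)
    · simp only [if_neg hin]
      by_cases hi_eq : i = n
      · subst hi_eq
        simpa [hcn, ← hd0] using hd 0 (by omega)
      · rw [if_neg (by omega), (by omega : i + 1 - n = i - n + 1)]
        exact hd (i - n) (by omega)

theorem EpsChain.of_dist_lt {ε δ : ℝ} {x y y' : X} (h : EpsChain f ε x y')
    (hy : dist y' y < δ) : EpsChain f (ε + δ) x y := by
  obtain ⟨n, c, hn, hc0, hcn, hc⟩ := h
  have hδ : 0 < δ := dist_nonneg.trans_lt hy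
  refine ⟨n, Function.update c n y, hn, by rw [Function.update_of_ne (by omega), hc0], by simp, ?_⟩
  intro i hi
  rw [Function.update_of_ne (by omega)]
  by_cases hlast : i + 1 = n
  · rw [hlast, Function.update_self]
    have hstep := hc i hi
    rw [hlast, hcn] at hstep
    calc dist (f (c i)) y ≤ dist (f (c i)) y' + dist y' y := dist_triangle _ _ _
      _ < ε + δ := add_lt_add hstep hy
  · rw [Function.update_of_ne hlast]
    linarith [hc i hi]

theorem ChainRel.trans {x y z : X} (hxy : ChainRel f x y) (hyz : ChainRel f y z) :
    ChainRel f x z :=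
  fun ε hε => (hxy ε hε).trans (hyz ε hε)

theorem chainRel_apply_self (x : X) : ChainRel f x (f x) :=
  fun ε hε => ⟨1, fun i => if i = 0 then x else f x, le_rfl, rfl, rfl,
    fun i hi => by simpa [Nat.lt_one_iff.mp hi] using hε⟩

def chainSet (f : X → X) (x : X) : Set X := {y | ChainRel f x y}

theorem apply_mem_chainSet (x : X) : f x ∈ chainSet f x := chainRel_apply_self x

theorem chainSet_subset_of_mem {x y : X} (hy : y ∈ chainSet f x) : chainSet f y ⊆ chainSet f x :=
  fun _ hz => ChainRel.trans hy hz

theorem isClosed_chainSet (x : X) : IsClosed (chainSet f x) := by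
  refine closure_subset_iff_isClosed.mp fun y hy ε hε => ?_
  obtain ⟨y', hy', hdist⟩ := Metric.mem_closure_iff.mp hy (ε / 2) (half_pos hε)
  rw [← add_halves ε]
  exact (hy' (ε / 2) (half_pos hε)).of_dist_lt (dist_comm y y' ▸ hdist)

theorem exists_chainSet_subset_of_isChain [CompactSpace X] {c : Set (Set X)}
    (hc : c ⊆ range (chainSet f)) (hchain : IsChain (· ⊆ ·) c) (hne : c.Nonempty) :
    ∃ z, ∀ s ∈ c, chainSet f z ⊆ s := by
  have : Nonempty c := hne.to_subtype
  have hchain' : IsChain (· ⊇ ·) c := hchain.symm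
  have hclosed : ∀ s ∈ c, IsClosed s := by
    rintro _ hs
    obtain ⟨u, rfl⟩ := hc hs
    exact isClosed_chainSet u
  obtain ⟨z, hz⟩ := IsCompact.nonempty_sInter_of_directed_nonempty_isCompact_isClosed
    hchain'.directedOn
    (fun s hs => by obtain ⟨u, rfl⟩ := hc hs; exact ⟨f u, apply_mem_chainSet u⟩)
    (fun s hs => (hclosed s hs).isCompact) hclosed
  refine ⟨z, fun s hs => ?_⟩
  obtain ⟨u, rfl⟩ := hc hs
  exact chainSet_subset_of_mem (hz _ hs)

theorem exists_minimal_chainSet [CompactSpace X] [Nonempty X] (f : X → X) :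
    ∃ x, ∀ y ∈ chainSet f x, chainSet f x ⊆ chainSet f y := by
  obtain ⟨_, -, ⟨x, rfl⟩, hmin⟩ := zorn_superset_nonempty (range (chainSet f))
    (fun c hc hchain hne =>
      let ⟨z, hz⟩ := exists_chainSet_subset_of_isChain hc hchain hne
      ⟨chainSet f z, mem_range_self z, hz⟩)
    _ (mem_range_self (Classical.arbitrary X))
  exact ⟨x, fun y hy => hmin (mem_range_self y) (chainSet_subset_of_mem hy)⟩

end ChainRel

theorem stmt4 [MetricSpace X] [CompactSpace X] [Nonempty X] (f : X → X) :
    ∃ S : Set X, S.Nonempty ∧ Set.MapsTo f S S ∧ ∀ x ∈ S, ∀ y ∈ S, ChainRel f x y := by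
  obtain ⟨x, hmin⟩ := exists_minimal_chainSet f
  refine ⟨chainSet f x, ⟨f x, apply_mem_chainSet x⟩, fun y hy => ?_, fun y hy z hz => ?_⟩
  · exact chainSet_subset_of_mem hy (apply_mem_chainSet y)
  · exact hmin y hy hz
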